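/- Define g : [0,1] → ℝ by g(t) = 1/ln(e/t) for t ∈ (0,1] and g(0) = 0. Then g' ∈ L¹([0,1]) with ∫_0^1 g'(t) dt = 1, but S_d[g'] ∉ L¹([0,1]) for any d ≥ 3. In particular, S_d is not bounded from L¹([0,1]) to L¹([0,1]). -/

import Mathlib

/-!
With `g t = 1 / log (e / t)` one has `g' t = 1 / (t log² (e / t)) ≥ 0` and `g (0⁺) = 0`,
so `∫₀ˣ g' = g x`; in particular `∫₀¹ g' = g 1 = 1`. Since `ϱ_d` is bounded below by a
constant `K > 0` on `[0, 1/2]`, substituting `u = t s` gives `S_d[g'](s) ≥ K s⁻¹ g (s / 2)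
= K / (s log (2e / s))`, whose integral near `0` diverges like `log log (1 / s)`.
-/

open MeasureTheory Real Set

noncomputable def c (d : ℕ) : ℝ :=
  2 * Real.Gamma ((d : ℝ) / 2) / (Real.sqrt π * Real.Gamma (((d : ℝ) - 1) / 2))

noncomputable def rho (d : ℕ) (t : ℝ) : ℝ :=
  c d * (1 - t ^ 2) ^ (((d : ℝ) - 3) / 2)

noncomputable def S (d : ℕ) (f : ℝ → ℝ) (s : ℝ) : ℝ :=
  ∫ t in (0:ℝ)..1, f (t * s) * rho d t

open Filter Topology

-- For `t = 0` the junk values `e / 0 = 0`, `log 0 = 0`, `0⁻¹ = 0` give the paper's `g 0 = 0`.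
noncomputable def g (t : ℝ) : ℝ := (log (exp 1 / t))⁻¹

noncomputable def g' (t : ℝ) : ℝ := 1 / (t * (log (exp 1 / t)) ^ 2)

lemma g_zero : g 0 = 0 := by simp [g]

lemma g_one : g 1 = 1 := by simp [g]

lemma g'_nonneg {t : ℝ} (ht : 0 ≤ t) : 0 ≤ g' t := by
  unfold g'; positivity

lemma log_exp_one_div_ne_zero {t : ℝ} (ht : 0 < t) (hte : t ≠ exp 1) :
    log (exp 1 / t) ≠ 0 := by
  rw [log_div (exp_ne_zero 1) ht.ne', log_exp, sub_ne_zero, ne_comm]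
  exact fun h => hte (by rw [← h, exp_log ht])

lemma hasDerivAt_log_const_div {a t : ℝ} (ha : a ≠ 0) (ht : t ≠ 0) :
    HasDerivAt (fun u => log (a / u)) (-t⁻¹) t := by
  have := ((hasDerivAt_inv ht).const_mul a).log (by simp [ha, ht])
  convert this using 1
  · ext u; rw [div_eq_mul_inv]
  · field_simp

lemma hasDerivAt_g {t : ℝ} (ht : 0 < t) (hte : t ≠ exp 1) : HasDerivAt g (g' t) t := by
  refine ((hasDerivAt_log_const_div (exp_ne_zero 1) ht.ne').inv
    (log_exp_one_div_ne_zero ht hte)).congr_deriv ?_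
  rw [g']
  field_simp

lemma tendsto_g_nhdsGT_zero : Tendsto g (𝓝[>] 0) (𝓝 0) :=
  tendsto_inv_atTop_zero.comp <| tendsto_log_atTop.comp <|
    (tendsto_inv_nhdsGT_zero.const_mul_atTop (exp_pos 1)).congr
      fun _ => (div_eq_mul_inv _ _).symm

lemma continuousOn_g : ContinuousOn g (Ico 0 (exp 1)) := by
  intro t ⟨ht0, hte⟩
  rcases ht0.eq_or_lt with rfl | ht0
  · refine (continuousWithinAt_Ioi_iff_Ici.mp ?_).mono fun _ h => h.1
    rw [ContinuousWithinAt, g_zero]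
    exact tendsto_g_nhdsGT_zero
  · exact (hasDerivAt_g ht0 hte.ne).continuousAt.continuousWithinAt

lemma intervalIntegrable_g' {x : ℝ} (hx0 : 0 ≤ x) (hx : x < exp 1) :
    IntervalIntegrable g' volume 0 x := by
  rw [intervalIntegrable_iff_integrableOn_Ioc_of_le hx0]
  exact intervalIntegral.integrableOn_deriv_of_nonneg
    (continuousOn_g.mono (Icc_subset_Ico_right hx))
    (fun t ht => hasDerivAt_g ht.1 (ht.2.trans hx).ne) fun t ht => g'_nonneg ht.1.le

lemma integral_g' {x : ℝ} (hx0 : 0 ≤ x) (hx : x < exp 1) : ∫ t in (0:ℝ)..x, g' t = g x := by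
  rw [intervalIntegral.integral_eq_sub_of_hasDerivAt_of_le hx0
    (continuousOn_g.mono (Icc_subset_Ico_right hx))
    (fun t ht => hasDerivAt_g ht.1 (ht.2.trans hx).ne) (intervalIntegrable_g' hx0 hx), g_zero,
    sub_zero]

lemma c_pos {d : ℕ} (hd : 2 ≤ d) : 0 < c d := by
  have hd' : (2:ℝ) ≤ d := by exact_mod_cast hd
  have := Gamma_pos_of_pos (by linarith : (0:ℝ) < d / 2)
  have := Gamma_pos_of_pos (by linarith : (0:ℝ) < (d - 1) / 2)
  unfold c
  positivity

lemma rho_nonneg {d : ℕ} (hd : 2 ≤ d) {t : ℝ} (ht : t ∈ Icc (0:ℝ) 1) : 0 ≤ rho d t :=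
  mul_nonneg (c_pos hd).le (rpow_nonneg (by nlinarith [ht.1, ht.2]) _)

lemma rho_exponent_nonneg {d : ℕ} (hd : 3 ≤ d) : (0:ℝ) ≤ ((d:ℝ) - 3) / 2 := by
  have : (3:ℝ) ≤ d := by exact_mod_cast hd
  linarith

lemma continuous_rho {d : ℕ} (hd : 3 ≤ d) : Continuous (rho d) := by
  unfold rho
  fun_prop (disch := exact rho_exponent_nonneg hd)

lemma exists_pos_le_rho {d : ℕ} (hd : 3 ≤ d) :
    ∃ K > 0, ∀ t ∈ Icc (0:ℝ) (1/2), K ≤ rho d t := by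
  refine ⟨c d * (3/4) ^ (((d:ℝ) - 3) / 2), mul_pos (c_pos (by omega)) (by positivity),
    fun t ht => mul_le_mul_of_nonneg_left ?_ (c_pos (by omega)).le⟩
  exact rpow_le_rpow (by norm_num) (by nlinarith [ht.1, ht.2]) (rho_exponent_nonneg hd)

lemma le_S_of_nonneg {d : ℕ} (hd : 3 ≤ d) {K : ℝ}
    (hK : ∀ t ∈ Icc (0:ℝ) (1/2), K ≤ rho d t) {f : ℝ → ℝ} {s : ℝ} (hs : 0 < s)
    (hf : ∀ u ∈ Ioc 0 s, 0 ≤ f u) (hfi : IntervalIntegrable f volume 0 s) :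
    K * (s⁻¹ * ∫ u in (0:ℝ)..s / 2, f u) ≤ S d f s := by
  have hfs : IntervalIntegrable (fun t => f (t * s)) volume 0 1 := by
    simpa [hs.ne'] using hfi.comp_mul_right (c := s)
  have hF : IntervalIntegrable (fun t => f (t * s) * rho d t) volume 0 1 :=
    hfs.mul_continuousOn (continuous_rho hd).continuousOn
  have hfs_nonneg : ∀ t ∈ Ioc (0:ℝ) 1, 0 ≤ f (t * s) := fun t ht =>
    hf _ ⟨mul_pos ht.1 hs, mul_le_of_le_one_left hs.le ht.2⟩
  have hF_nonneg : ∀ t ∈ Ioc (0:ℝ) 1, 0 ≤ f (t * s) * rho d t := fun t ht =>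
    mul_nonneg (hfs_nonneg t ht) (rho_nonneg (by omega) (Ioc_subset_Icc_self ht))
  calc K * (s⁻¹ * ∫ u in (0:ℝ)..s / 2, f u)
      = ∫ t in (0:ℝ)..1/2, K * f (t * s) := by
        rw [intervalIntegral.integral_const_mul, intervalIntegral.integral_comp_mul_right _ hs.ne',
          zero_mul, one_div_mul_eq_div, smul_eq_mul]
    _ ≤ ∫ t in (0:ℝ)..1/2, f (t * s) * rho d t := by
        have hsub : uIcc (0:ℝ) (1/2) ⊆ uIcc 0 1 := uIcc_subset_uIcc_left (by norm_num)
        refine intervalIntegral.integral_mono_on_of_le_Ioo (by norm_num)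
          ((hfs.mono_set hsub).const_mul K) (hF.mono_set hsub) fun t ht => ?_
        rw [mul_comm]
        exact mul_le_mul_of_nonneg_left (hK t (Ioo_subset_Icc_self ht))
          (hfs_nonneg t ⟨ht.1, by linarith [ht.2]⟩)
    _ ≤ S d f s :=
        intervalIntegral.integral_mono_interval le_rfl (by norm_num) (by norm_num)
          ((ae_restrict_iff' measurableSet_Ioc).mpr (.of_forall hF_nonneg)) hF

lemma not_integrableOn_inv_mul_inv_log {a b : ℝ} (ha : 0 < a) (hb : 0 < b) :
    ¬ IntegrableOn (fun s => s⁻¹ * (log (a / s))⁻¹) (Ioc 0 b) := by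
  have hlog : Tendsto (fun s => log (a / s)) (𝓝[>] 0) atTop :=
    tendsto_log_atTop.comp <| (tendsto_inv_nhdsGT_zero.const_mul_atTop ha).congr
      fun _ => (div_eq_mul_inv _ _).symm
  have hderiv : ∀ᶠ s in 𝓝[>] 0,
      HasDerivAt (fun s => log (log (a / s))) (-(s⁻¹ * (log (a / s))⁻¹)) s := by
    filter_upwards [self_mem_nhdsWithin, hlog.eventually_gt_atTop 0] with s hs hpos
    refine ((hasDerivAt_log_const_div ha.ne' (ne_of_gt hs)).log hpos.ne').congr_deriv ?_
    field_simp
  refine not_integrableOn_of_tendsto_norm_atTop_of_deriv_isBigO_filter (𝓝[>] 0)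
    (Ioc_mem_nhdsGT hb) (hderiv.mono fun s h => h.differentiableAt)
    (tendsto_norm_atTop_atTop.comp (tendsto_log_atTop.comp hlog)) ?_
  exact (EventuallyEq.isBigO (hderiv.mono fun s h => h.deriv)).trans
    (Asymptotics.isBigO_refl _ _).neg_left

lemma not_integrableOn_S_g' {d : ℕ} (hd : 3 ≤ d) : ¬ IntegrableOn (S d g') (Ioc 0 1) := by
  obtain ⟨K, hK0, hK⟩ := exists_pos_le_rho hd
  set h : ℝ → ℝ := fun s => s⁻¹ * (log (exp 1 * 2 / s))⁻¹
  have h_nonneg : ∀ s ∈ Ioc (0:ℝ) 1, 0 ≤ h s := fun s hs => by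
    have : 0 ≤ log (exp 1 * 2 / s) :=
      log_nonneg ((one_le_div hs.1).mpr (by linarith [hs.2, add_one_le_exp (1:ℝ)]))
    have := hs.1
    positivity
  have hS_ge : ∀ s ∈ Ioc (0:ℝ) 1, K * h s ≤ S d g' s := fun s hs => by
    have hs_lt : s < exp 1 := hs.2.trans_lt (one_lt_exp_iff.mpr one_pos)
    have := le_S_of_nonneg hd hK hs.1 (fun u hu => g'_nonneg hu.1.le)
      (intervalIntegrable_g' hs.1.le hs_lt)
    rwa [integral_g' (by linarith [hs.1]) (by linarith [hs.1]), g, div_div_eq_mul_div] at this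
  intro hS
  refine not_integrableOn_inv_mul_inv_log (by positivity : 0 < exp 1 * 2) one_pos ?_
  refine (integrable_const_mul_iff (isUnit_iff_ne_zero.mpr hK0.ne') h).mp
    (hS.mono' (by fun_prop) ((ae_restrict_iff' measurableSet_Ioc).mpr (.of_forall fun s hs => ?_)))
  rw [Real.norm_of_nonneg (mul_nonneg hK0.le (h_nonneg s hs))]
  exact hS_ge s hs

theorem S_not_bounded_L1 (d : ℕ) (hd : 3 ≤ d) :
    IntegrableOn (fun t : ℝ => 1 / (t * (Real.log (Real.exp 1 / t)) ^ 2))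
        (Set.Ioc (0:ℝ) 1) ∧
    (∫ t in Set.Ioc (0:ℝ) 1, 1 / (t * (Real.log (Real.exp 1 / t)) ^ 2)) = 1 ∧
    ¬ IntegrableOn (S d (fun t => 1 / (t * (Real.log (Real.exp 1 / t)) ^ 2)))
        (Set.Ioc (0:ℝ) 1) ∧
    ¬ ∃ C : ℝ, ∀ f : ℝ → ℝ, IntegrableOn f (Set.Ioc (0:ℝ) 1) →
        IntegrableOn (S d f) (Set.Ioc (0:ℝ) 1) ∧
        (∫ s in Set.Ioc (0:ℝ) 1, |S d f s|) ≤ C * ∫ t in Set.Ioc (0:ℝ) 1, |f t| := by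
  have h_one_lt : (1:ℝ) < exp 1 := one_lt_exp_iff.mpr one_pos
  have hint : IntegrableOn g' (Ioc 0 1) :=
    (intervalIntegrable_iff_integrableOn_Ioc_of_le zero_le_one).mp
      (intervalIntegrable_g' zero_le_one h_one_lt)
  have hval : ∫ t in Ioc (0:ℝ) 1, g' t = 1 := by
    rw [← intervalIntegral.integral_of_le zero_le_one, integral_g' zero_le_one h_one_lt, g_one]
  have hS : ¬ IntegrableOn (S d g') (Ioc 0 1) := not_integrableOn_S_g' hd
  exact ⟨hint, hval, hS, fun ⟨C, hC⟩ => hS (hC g' hint).1⟩
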